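/- arXiv:1210.0931 — 2 statements merged into one kernel-verified Lean document; each statement's English description precedes it below -/
import Mathlib

section
/- Conversely, every function w holomorphic on the unit disk 𝔻, continuous on its closure, satisfying Re(conj(ζ^κ) w(ζ)) = 0 for all ζ ∈ ∂𝔻 (κ ∈ ℤ, κ ≥ 0), is of the form w(z) = z^κ (i d₀ + Σ_{l=1}^κ (d_l z^l − conj(d_l) z^{−l})) for some d₀ ∈ ℝ and d₁,…,d_κ ∈ ℂ. In particular, the real vector space of such solutions has dimension 2κ+1. -/
/-!
Let `c n` (`n : ℤ`) be the Fourier coefficients of `w` on the unit circle. By Cauchy's theorem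
`c n = 0` for `n < 0`, and for `n ≥ 0` they are the Taylor coefficients of `w` at `0`. Since
`conj ζ = ζ⁻¹` on the circle, the boundary condition says `w ζ = -ζ ^ (2κ) * conj (w ζ)`, which
turns into the symmetry `c n = -conj (c (2κ - n))` for all `n`. Hence `c n = 0` for `n > 2κ`, so
`w` is a polynomial of degree at most `2κ` whose coefficients pair off as
`c (κ - l) = -conj (c (κ + l))`, with `c κ` purely imaginary: this is the stated form.
The parameters are unique because they are coefficients of that polynomial.
-/

open Complex Metric Real Polynomial
open scoped ComplexConjugate

-- Indexed by `ℤ` so that the boundary symmetry `n ↦ 2κ - n` is a single identity.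
noncomputable def unitCircleCoeff (f : ℂ → ℂ) (n : ℤ) : ℂ :=
  (2 * π : ℂ)⁻¹ * ∫ θ in (0 : ℝ)..2 * π, circleMap 0 1 θ ^ (-n) * f (circleMap 0 1 θ)

lemma circleIntegral_zpow_mul (f : ℂ → ℂ) (k : ℤ) :
    (∮ z in C(0, 1), z ^ k * f z) =
      I * ∫ θ in (0 : ℝ)..2 * π, circleMap 0 1 θ ^ (k + 1) * f (circleMap 0 1 θ) := by
  rw [circleIntegral, ← intervalIntegral.integral_const_mul]
  refine intervalIntegral.integral_congr fun θ _ => ?_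
  rw [deriv_circleMap, zpow_add_one₀ (circleMap_ne_center one_ne_zero), smul_eq_mul,
    circleMap_zero]
  ring

lemma unitCircleCoeff_eq_circleIntegral (f : ℂ → ℂ) (n : ℤ) :
    unitCircleCoeff f n = (2 * π * I)⁻¹ * ∮ z in C(0, 1), z ^ (-n - 1) * f z := by
  rw [circleIntegral_zpow_mul, sub_add_cancel, unitCircleCoeff, mul_inv (2 * π : ℂ) I,
    mul_assoc, ← mul_assoc I⁻¹, inv_mul_cancel₀ I_ne_zero, one_mul]

lemma unitCircleCoeff_eq_zero_of_neg {f : ℂ → ℂ} (hf : DiffContOnCl ℂ f (ball 0 1)) {n : ℤ}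
    (hn : n < 0) : unitCircleCoeff f n = 0 := by
  obtain ⟨m, hm⟩ : ∃ m : ℕ, -n - 1 = m := ⟨(-n - 1).toNat, by omega⟩
  have hcauchy : (∮ z in C(0, 1), z ^ m * f z) = 0 :=
    ((differentiable_pow m).diffContOnCl.smul hf).circleIntegral_eq_zero zero_le_one
  simp only [unitCircleCoeff_eq_circleIntegral, hm, zpow_natCast, hcauchy, mul_zero]

lemma hasSum_unitCircleCoeff_mul_pow {f : ℂ → ℂ} (hf : DiffContOnCl ℂ f (ball 0 1)) {z : ℂ}
    (hz : z ∈ ball (0 : ℂ) 1) : HasSum (fun n : ℕ => unitCircleCoeff f n * z ^ n) (f z) := by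
  have hz' : z ∈ eball (0 : ℂ) (1 : NNReal) := by rw [eball_coe]; simpa using hz
  have hps := (hf.hasFPowerSeriesOnBall (R := 1) one_pos).hasSum hz'
  suffices hterm : ∀ n : ℕ, (cauchyPowerSeries f 0 1 n fun _ => z) = unitCircleCoeff f n * z ^ n by
    simpa only [zero_add, NNReal.coe_one, hterm] using hps
  intro n
  have hint : (∮ ζ in C(0, 1), (z / (ζ - 0)) ^ n • (ζ - 0)⁻¹ • f ζ) =
      z ^ n * ∮ ζ in C(0, 1), ζ ^ (-(n : ℤ) - 1) * f ζ := by
    rw [← circleIntegral.integral_const_mul]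
    refine circleIntegral.integral_congr zero_le_one fun ζ hζ => ?_
    have hζ0 : ζ ≠ 0 := ne_zero_of_mem_sphere one_ne_zero ⟨ζ, hζ⟩
    simp only [sub_zero, smul_eq_mul, zpow_sub_one₀ hζ0, zpow_neg, zpow_natCast, div_pow]
    field_simp
  rw [cauchyPowerSeries_apply, unitCircleCoeff_eq_circleIntegral, hint, smul_eq_mul]
  ring

lemma conj_zpow_of_norm_eq_one {ζ : ℂ} (hζ : ‖ζ‖ = 1) (m : ℤ) : conj (ζ ^ m) = ζ ^ (-m) := by
  rw [map_zpow₀, ← inv_eq_conj hζ, inv_zpow']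

lemma conj_eq_neg_of_re_eq_zero {u : ℂ} (h : u.re = 0) : conj u = -u := by
  apply Complex.ext <;> simp [h]

lemma zpow_neg_mul_eq_neg_conj {κ : ℕ} {ζ a : ℂ} (hζ : ‖ζ‖ = 1) (h : (conj (ζ ^ κ) * a).re = 0)
    (n : ℤ) : ζ ^ (-n) * a = -conj (ζ ^ (-(2 * κ - n)) * a) := by
  have hζ0 : ζ ≠ 0 := norm_ne_zero_iff.mp (by simp [hζ])
  have ha : conj a = -(ζ ^ (-(2 * κ : ℤ)) * a) := by
    have hu := conj_eq_neg_of_re_eq_zero h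
    rw [map_mul, conj_conj, ← zpow_natCast, conj_zpow_of_norm_eq_one hζ] at hu
    calc conj a = ζ ^ (-(κ : ℤ)) * (ζ ^ (κ : ℤ) * conj a) := by
          rw [← mul_assoc, ← zpow_add₀ hζ0, neg_add_cancel, zpow_zero, one_mul]
      _ = -(ζ ^ (-(2 * κ : ℤ)) * a) := by
          rw [hu, mul_neg, ← mul_assoc, ← zpow_add₀ hζ0]
          ring_nf
  rw [map_mul, conj_zpow_of_norm_eq_one hζ, ha, neg_neg, mul_neg, neg_neg, ← mul_assoc,
    ← zpow_add₀ hζ0]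
  ring_nf

lemma unitCircleCoeff_eq_neg_conj {κ : ℕ} {f : ℂ → ℂ}
    (hb : ∀ ζ : ℂ, ‖ζ‖ = 1 → (conj (ζ ^ κ) * f ζ).re = 0) (n : ℤ) :
    unitCircleCoeff f n = -conj (unitCircleCoeff f (2 * κ - n)) := by
  have hpt : ∀ θ : ℝ, circleMap 0 1 θ ^ (-n) * f (circleMap 0 1 θ) =
      -conj (circleMap 0 1 θ ^ (-(2 * κ - n)) * f (circleMap 0 1 θ)) := fun θ =>
    have hθ : ‖circleMap 0 1 θ‖ = 1 := by simp
    zpow_neg_mul_eq_neg_conj hθ (hb _ hθ) n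
  simp only [unitCircleCoeff, hpt, intervalIntegral.integral_neg,
    ← intervalIntegral.intervalIntegral_conj, map_mul,
    map_inv₀, map_ofNat, conj_ofReal, mul_neg]

-- The paper's `z ^ κ * (i d₀ + ∑ l ∈ [1, κ], (d l * z ^ l - conj (d l) * z ^ (-l)))`,
-- with `p = (d₀, fun l => d (l + 1))`.
noncomputable def rhSolution (κ : ℕ) (p : ℝ × (Fin κ → ℂ)) (z : ℂ) : ℂ :=
  I * (p.1 : ℂ) * z ^ κ +
    ∑ l : Fin κ, (p.2 l * z ^ (κ + ((l : ℕ) + 1)) - conj (p.2 l) * z ^ (κ - ((l : ℕ) + 1)))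

lemma continuous_rhSolution (κ : ℕ) (p : ℝ × (Fin κ → ℂ)) : Continuous (rhSolution κ p) := by
  unfold rhSolution
  fun_prop

noncomputable def rhPolynomial (κ : ℕ) (p : ℝ × (Fin κ → ℂ)) : ℂ[X] :=
  C (I * (p.1 : ℂ)) * X ^ κ +
    ∑ l : Fin κ, (C (p.2 l) * X ^ (κ + ((l : ℕ) + 1)) - C (conj (p.2 l)) * X ^ (κ - ((l : ℕ) + 1)))

lemma eval_rhPolynomial (κ : ℕ) (p : ℝ × (Fin κ → ℂ)) (z : ℂ) :
    (rhPolynomial κ p).eval z = rhSolution κ p z := by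
  simp [rhPolynomial, rhSolution, eval_finsetSum]

lemma coeff_rhPolynomial_self (κ : ℕ) (p : ℝ × (Fin κ → ℂ)) :
    (rhPolynomial κ p).coeff κ = I * p.1 := by
  simp only [rhPolynomial, coeff_add, finsetSum_coeff, coeff_sub, coeff_C_mul, coeff_X_pow]
  simp only [if_true, mul_one, add_eq_left]
  exact Finset.sum_eq_zero fun l _ => by
    rw [if_neg (by omega), if_neg (by have := l.isLt; omega), mul_zero, mul_zero, sub_zero]

lemma coeff_rhPolynomial_add (κ : ℕ) (p : ℝ × (Fin κ → ℂ)) (l : Fin κ) :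
    (rhPolynomial κ p).coeff (κ + ((l : ℕ) + 1)) = p.2 l := by
  simp only [rhPolynomial, coeff_add, finsetSum_coeff, coeff_sub, coeff_C_mul, coeff_X_pow]
  rw [if_neg (by omega), mul_zero, zero_add, Finset.sum_eq_single l]
  · rw [if_pos rfl, if_neg (by omega), mul_one, mul_zero, sub_zero]
  · intro m _ hm
    rw [if_neg (by rw [add_right_inj, add_left_inj, Fin.val_inj]; exact Ne.symm hm),
      if_neg (by omega), mul_zero, mul_zero, sub_zero]
  · simp

lemma rhPolynomial_injective (κ : ℕ) : Function.Injective (rhPolynomial κ) := by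
  intro p q h
  have h₁ : I * (p.1 : ℂ) = I * q.1 := by
    rw [← coeff_rhPolynomial_self, h, coeff_rhPolynomial_self]
  have h₂ : p.2 = q.2 := funext fun l => by
    rw [← coeff_rhPolynomial_add, h, coeff_rhPolynomial_add]
  exact Prod.ext (by exact_mod_cast mul_left_cancel₀ I_ne_zero h₁) h₂

lemma eq_of_eqOn_rhSolution {κ : ℕ} {p q : ℝ × (Fin κ → ℂ)} {s : Set ℂ} (hs : s.Infinite)
    (h : s.EqOn (rhSolution κ p) (rhSolution κ q)) : p = q :=
  rhPolynomial_injective κ <| eq_of_infinite_eval_eq _ _ <| hs.mono fun z hz => by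
    simp only [Set.mem_ofPred_eq, eval_rhPolynomial, h hz]

lemma sum_range_eq_rhSolution {κ : ℕ} {c : ℕ → ℂ} (hc : ∀ n ≤ 2 * κ, c n = -conj (c (2 * κ - n)))
    (z : ℂ) :
    ∑ n ∈ Finset.range (2 * κ + 1), c n * z ^ n =
      rhSolution κ ((c κ).im, fun l => c (κ + ((l : ℕ) + 1))) z := by
  have hmid : I * ((c κ).im : ℂ) = c κ := by
    have hre : (c κ).re = 0 := by
      have := congrArg re (hc κ (by omega))
      rw [two_mul, Nat.add_sub_cancel, neg_re, conj_re] at this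
      linarith
    apply Complex.ext <;> simp [hre]
  rw [rhSolution, hmid, Fin.sum_univ_eq_sum_range
    (fun l => c (κ + (l + 1)) * z ^ (κ + (l + 1)) - conj (c (κ + (l + 1))) * z ^ (κ - (l + 1))),
    Finset.sum_sub_distrib, show 2 * κ + 1 = κ + (κ + 1) by omega, Finset.sum_range_add,
    Finset.sum_range_succ', ← Finset.sum_range_reflect]
  have hreflect : ∀ l ∈ Finset.range κ,
      c (κ - 1 - l) * z ^ (κ - 1 - l) = -(conj (c (κ + (l + 1))) * z ^ (κ - (l + 1))) :=
    fun l hl => by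
      have hl : l < κ := Finset.mem_range.mp hl
      rw [hc (κ - 1 - l) (by omega), show 2 * κ - (κ - 1 - l) = κ + (l + 1) by omega,
        show κ - 1 - l = κ - (l + 1) by omega, neg_mul]
  rw [Finset.sum_congr rfl hreflect, Finset.sum_neg_distrib, add_zero]
  ring

/-- every w holomorphic on 𝔻, continuous on the closed disk, with
Re(conj(ζ^κ) w(ζ)) = 0 on ∂𝔻 (κ ≥ 0), has the form
w(z) = i d₀ z^κ + Σ_{l=1}^κ (d_l z^{κ+l} − conj(d_l) z^{κ−l}), with coefficients
(d₀, d₁,…,d_κ) ∈ ℝ × ℂ^κ unique; so the solution space has real dimension 2κ+1. -/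
theorem stmt7 (κ : ℕ) (w : ℂ → ℂ)
    (hol : DifferentiableOn ℂ w (Metric.ball 0 1))
    (cont : ContinuousOn w (Metric.closedBall 0 1))
    (hb : ∀ ζ : ℂ, ‖ζ‖ = 1 → ((starRingEnd ℂ) (ζ ^ κ) * w ζ).re = 0) :
    ∃! p : ℝ × (Fin κ → ℂ),
      ∀ z ∈ Metric.closedBall (0 : ℂ) 1,
        w z = Complex.I * (p.1 : ℂ) * z ^ κ +
          ∑ l : Fin κ, (p.2 l * z ^ (κ + ((l : ℕ) + 1))
            - (starRingEnd ℂ) (p.2 l) * z ^ (κ - ((l : ℕ) + 1))) := by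
  have hw : DiffContOnCl ℂ w (ball 0 1) := .mk_ball hol cont
  have hsymm : ∀ n : ℤ, unitCircleCoeff w n = -conj (unitCircleCoeff w (2 * κ - n)) :=
    unitCircleCoeff_eq_neg_conj hb
  have hball : ∀ z ∈ ball (0 : ℂ) 1,
      w z = ∑ n ∈ Finset.range (2 * κ + 1), unitCircleCoeff w n * z ^ n := fun z hz =>
    (hasSum_unitCircleCoeff_mul_pow hw hz).unique <| hasSum_sum_of_ne_finset_zero fun n hn => by
      rw [Finset.mem_range, not_lt] at hn
      rw [hsymm, unitCircleCoeff_eq_zero_of_neg hw (by omega), map_zero, neg_zero, zero_mul]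
  set p : ℝ × (Fin κ → ℂ) :=
    ((unitCircleCoeff w κ).im, fun l => unitCircleCoeff w ((κ + ((l : ℕ) + 1) : ℕ)))
  have hp : (closedBall (0 : ℂ) 1).EqOn w (rhSolution κ p) := by
    refine Set.EqOn.of_subset_closure (fun z hz => ?_) cont ?_ ball_subset_closedBall
      (closure_ball 0 one_ne_zero).ge
    · rw [hball z hz]
      exact sum_range_eq_rhSolution (fun n hn => by rw [hsymm, Nat.cast_sub hn]; push_cast; rfl) z
    · exact (continuous_rhSolution κ p).continuousOn
  exact ⟨p, hp, fun q hq => eq_of_eqOn_rhSolution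
    (infinite_of_mem_nhds 0 (closedBall_mem_nhds 0 one_pos))
    fun z hz => (hq z hz).symm.trans (hp hz)⟩
end

section
/- If κ < 0 is a negative integer and w is holomorphic on the unit disk 𝔻, continuous on the closed disk, and satisfies Re(conj(ζ)^{−κ} · w(ζ)) = 0 for all ζ ∈ ∂𝔻 (equivalently, Re(ζ^{−κ} w(ζ)) = 0 on |ζ| = 1), then w ≡ 0. -/
open Metric Complex Set

/-!
Put `n = -κ ≥ 1` and `f z = z ^ n * w z`. On the unit circle `Re f = 0`, and the maximum principle
applied to `exp (± f)` makes `Re f = 0` on the whole disk. By the open mapping theorem `f` is then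
constant, and `f 0 = 0` because `n ≥ 1`. Hence `w` vanishes on the punctured disk, and by continuity
on the closed disk.
-/

theorem DiffContOnCl.re_le_of_forall_mem_frontier_re_le {E : Type*} [NormedAddCommGroup E]
    [NormedSpace ℂ E] [Nontrivial E] {f : E → ℂ} {U : Set E} (hU : Bornology.IsBounded U)
    (hf : DiffContOnCl ℂ f U) {C : ℝ} (hC : ∀ ζ ∈ frontier U, (f ζ).re ≤ C) {z : E}
    (hz : z ∈ closure U) : (f z).re ≤ C := by
  have hexp : ∀ ζ, ‖exp (f ζ)‖ = Real.exp (f ζ).re := fun ζ => norm_exp _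
  have := norm_le_of_forall_mem_frontier_norm_le hU (differentiable_exp.comp_diffContOnCl hf)
    (fun ζ hζ => ((hexp ζ).trans_le (Real.exp_le_exp.2 (hC ζ hζ)))) hz
  exact Real.exp_le_exp.1 ((hexp z).symm.trans_le this)

theorem DiffContOnCl.re_eq_zero_of_forall_mem_frontier {E : Type*} [NormedAddCommGroup E]
    [NormedSpace ℂ E] [Nontrivial E] {f : E → ℂ} {U : Set E} (hU : Bornology.IsBounded U)
    (hf : DiffContOnCl ℂ f U) (h0 : ∀ ζ ∈ frontier U, (f ζ).re = 0) {z : E}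
    (hz : z ∈ closure U) : (f z).re = 0 := by
  have hneg := hf.neg.re_le_of_forall_mem_frontier_re_le hU (C := 0)
    (fun ζ hζ => by simp [h0 ζ hζ]) hz
  have hpos := hf.re_le_of_forall_mem_frontier_re_le hU (fun ζ hζ => (h0 ζ hζ).le) hz
  simp only [Pi.neg_apply, neg_re, neg_nonpos] at hneg
  exact le_antisymm hpos hneg

theorem AnalyticOnNhd.exists_eq_const_of_mapsTo_of_interior_eq_empty {E : Type*}
    [NormedAddCommGroup E] [NormedSpace ℂ E] {g : E → ℂ} {U : Set E} {s : Set ℂ}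
    (hg : AnalyticOnNhd ℂ g U) (hUo : IsOpen U) (hUc : IsPreconnected U) (hUne : U.Nonempty)
    (hgs : MapsTo g U s) (hs : interior s = ∅) : ∃ c, ∀ z ∈ U, g z = c := by
  refine (hg.is_constant_or_isOpen hUc).resolve_right fun hopen => ?_
  have himage : g '' U ⊆ interior s :=
    interior_maximal hgs.image_subset (hopen U subset_rfl hUo)
  rw [hs, subset_empty_iff] at himage
  exact (hUne.image g).ne_empty himage

theorem Complex.interior_preimage_re_singleton (a : ℝ) : interior (re ⁻¹' {a}) = ∅ := by
  rw [interior_preimage_re, interior_singleton, preimage_empty]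

theorem closedBall_subset_closure_ball_diff_singleton {E : Type*} [NormedAddCommGroup E]
    [NormedSpace ℝ E] [Nontrivial E] (x : E) {r : ℝ} (hr : r ≠ 0) :
    closedBall x r ⊆ closure (ball x r \ {x}) := by
  rw [← closure_ball x hr]
  exact closure_minimal ((dense_compl_singleton x).open_subset_closure_inter isOpen_ball)
    isClosed_closure

/-- the homogeneous Riemann–Hilbert problem with negative index κ < 0,
Re(ζ^{−κ} w(ζ)) = 0 on |ζ| = 1, has only the trivial continuous solution. -/
theorem stmt8 (κ : ℤ) (hκ : κ < 0) (w : ℂ → ℂ)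
    (hol : DifferentiableOn ℂ w (Metric.ball 0 1))
    (cont : ContinuousOn w (Metric.closedBall 0 1))
    (hb : ∀ ζ : ℂ, ‖ζ‖ = 1 → (ζ ^ (-κ) * w ζ).re = 0) :
    ∀ z ∈ Metric.closedBall (0 : ℂ) 1, w z = 0 := by
  obtain ⟨n, rfl⟩ := Int.eq_negSucc_of_lt_zero hκ
  set f : ℂ → ℂ := fun z => z ^ (n + 1) * w z
  have hf : DiffContOnCl ℂ f (ball 0 1) :=
    ⟨(differentiableOn_pow _).mul hol, by
      rw [closure_ball 0 one_ne_zero]; exact (continuousOn_pow _).mul cont⟩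
  have hf_re : MapsTo f (ball 0 1) (re ⁻¹' {0}) := fun z hz =>
    hf.re_eq_zero_of_forall_mem_frontier isBounded_ball
      (fun ζ hζ => by
        rw [frontier_ball 0 one_ne_zero, mem_sphere_zero_iff_norm] at hζ
        simpa only [Int.neg_negSucc, ← Nat.cast_succ, zpow_natCast] using hb ζ hζ)
      (subset_closure hz)
  obtain ⟨c, hc⟩ := (hf.differentiableOn.analyticOnNhd isOpen_ball)
    |>.exists_eq_const_of_mapsTo_of_interior_eq_empty isOpen_ball
      (convex_ball 0 1).isPreconnected (nonempty_ball.2 one_pos) hf_re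
      (interior_preimage_re_singleton 0)
  have hf_zero : ∀ z ∈ ball (0 : ℂ) 1, f z = 0 := fun z hz => by
    rw [hc z hz, ← hc 0 (mem_ball_self one_pos)]
    simp [f]
  have hw : EqOn w 0 (ball 0 1 \ {0}) := fun z ⟨hz, hz0⟩ =>
    (mul_eq_zero.1 (hf_zero z hz)).resolve_left (pow_ne_zero _ hz0)
  exact hw.of_subset_closure cont continuousOn_const
    (sdiff_subset.trans ball_subset_closedBall)
    (closedBall_subset_closure_ball_diff_singleton 0 one_ne_zero)
end
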